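/- (Concavity of the finite-horizon value.) For every λ ∈ ℝ^n and every integer τ ≥ 1, the function x ↦ W_τ(x) is concave on Δ. -/
import Mathlib


open Matrix Finset Filter

def IsStochastic {n : ℕ} (P : Matrix (Fin n) (Fin n) ℝ) : Prop :=
  (∀ i j, 0 ≤ P i j) ∧ ∀ i, ∑ j, P i j = 1

def feas {n : ℕ} (α : ℝ) (x : Fin n → ℝ) : Set (Fin n → ℝ) :=
  {u | (∀ i, 0 ≤ u i ∧ u i ≤ x i) ∧ ∑ i, u i ≤ α}

def phi {n : ℕ} (P0 P1 : Matrix (Fin n) (Fin n) ℝ) (x u : Fin n → ℝ) : Fin n → ℝ :=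
  x ᵥ* P0 + u ᵥ* (P1 - P0)

def rew {n : ℕ} (r0 r1 x u : Fin n → ℝ) : ℝ :=
  r0 ⬝ᵥ x + (r1 - r0) ⬝ᵥ u

def l1 {n : ℕ} (x : Fin n → ℝ) : ℝ := ∑ i, |x i|

/-- A feasible trajectory from `x`. -/
def IsTraj {n : ℕ} (α : ℝ) (P0 P1 : Matrix (Fin n) (Fin n) ℝ) (x : Fin n → ℝ)
    (X U : ℕ → Fin n → ℝ) : Prop :=
  X 0 = x ∧ ∀ t, U t ∈ feas α (X t) ∧ X (t + 1) = phi P0 P1 (X t) (U t)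

/-- Discounted value function `V_β`. -/
noncomputable def Vdisc {n : ℕ} (α : ℝ) (P0 P1 : Matrix (Fin n) (Fin n) ℝ)
    (r0 r1 : Fin n → ℝ) (β : ℝ) (x : Fin n → ℝ) : ℝ :=
  sSup {v | ∃ X U : ℕ → Fin n → ℝ, IsTraj α P0 P1 x X U ∧
    v = ∑' t : ℕ, β ^ t * rew r0 r1 (X t) (U t)}

/-- Finite-horizon value `W_τ(x)` with terminal reward `λ · x(τ)`. -/
noncomputable def Wval {n : ℕ} (α : ℝ) (P0 P1 : Matrix (Fin n) (Fin n) ℝ)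
    (r0 r1 lam : Fin n → ℝ) (τ : ℕ) (x : Fin n → ℝ) : ℝ :=
  sSup {v | ∃ X U : ℕ → Fin n → ℝ, IsTraj α P0 P1 x X U ∧
    v = (∑ t ∈ Finset.range τ, rew r0 r1 (X t) (U t)) + lam ⬝ᵥ X τ}

/-- Rotated cost `l̃(x,u) = g* − R(x,u) + λ·x − λ·Φ(x,u)`. -/
noncomputable def ltil {n : ℕ} (P0 P1 : Matrix (Fin n) (Fin n) ℝ)
    (r0 r1 : Fin n → ℝ) (gs : ℝ) (lam : Fin n → ℝ) (x u : Fin n → ℝ) : ℝ :=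
  gs - rew r0 r1 x u + lam ⬝ᵥ x - lam ⬝ᵥ phi P0 P1 x u

/-- Finite-horizon rotated cost `L_τ(x)`. -/
noncomputable def Lval {n : ℕ} (α : ℝ) (P0 P1 : Matrix (Fin n) (Fin n) ℝ)
    (r0 r1 : Fin n → ℝ) (gs : ℝ) (lam : Fin n → ℝ) (τ : ℕ) (x : Fin n → ℝ) : ℝ :=
  sInf {v | ∃ X U : ℕ → Fin n → ℝ, IsTraj α P0 P1 x X U ∧
    v = ∑ t ∈ Finset.range τ, ltil P0 P1 r0 r1 gs lam (X t) (U t)}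

section Aux

variable {n : ℕ} {α : ℝ} {P0 P1 : Matrix (Fin n) (Fin n) ℝ}

/-- The set whose supremum defines `Wval`. -/
def WS (α : ℝ) (P0 P1 : Matrix (Fin n) (Fin n) ℝ) (r0 r1 lam : Fin n → ℝ) (τ : ℕ)
    (x : Fin n → ℝ) : Set ℝ :=
  {v | ∃ X U : ℕ → Fin n → ℝ, IsTraj α P0 P1 x X U ∧
    v = (∑ t ∈ Finset.range τ, rew r0 r1 (X t) (U t)) + lam ⬝ᵥ X τ}

lemma Wval_eq (r0 r1 lam : Fin n → ℝ) (τ : ℕ) (x : Fin n → ℝ) :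
    Wval α P0 P1 r0 r1 lam τ x = sSup (WS α P0 P1 r0 r1 lam τ x) := rfl

lemma phi_apply (x u : Fin n → ℝ) (j : Fin n) :
    phi P0 P1 x u j = ∑ i, ((x i - u i) * P0 i j + u i * P1 i j) := by
  simp only [phi, Pi.add_apply, Matrix.vecMul, dotProduct, Matrix.sub_apply,
    ← Finset.sum_add_distrib]
  exact Finset.sum_congr rfl fun i _ => by ring

lemma mem_simplex_iff (x : Fin n → ℝ) :
    x ∈ stdSimplex ℝ (Fin n) ↔ (∀ i, 0 ≤ x i) ∧ ∑ i, x i = 1 := by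
  simp [stdSimplex]

lemma phi_mem (hP0 : IsStochastic P0) (hP1 : IsStochastic P1) {x u : Fin n → ℝ}
    (hx : x ∈ stdSimplex ℝ (Fin n)) (hu : u ∈ feas α x) :
    phi P0 P1 x u ∈ stdSimplex ℝ (Fin n) := by
  rw [mem_simplex_iff] at hx ⊢
  constructor
  · intro j
    rw [phi_apply]
    refine Finset.sum_nonneg fun i _ => add_nonneg ?_ ?_
    · exact mul_nonneg (by linarith [(hu.1 i).2]) (hP0.1 i j)
    · exact mul_nonneg (hu.1 i).1 (hP1.1 i j)
  · calc ∑ j, phi P0 P1 x u j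
        = ∑ j, ∑ i, ((x i - u i) * P0 i j + u i * P1 i j) := by
          exact Finset.sum_congr rfl fun j _ => phi_apply x u j
      _ = ∑ i, ∑ j, ((x i - u i) * P0 i j + u i * P1 i j) := Finset.sum_comm
      _ = ∑ i, x i := Finset.sum_congr rfl fun i _ => by
          rw [Finset.sum_add_distrib, ← Finset.mul_sum, ← Finset.mul_sum, hP0.2 i, hP1.2 i]; ring
      _ = 1 := hx.2

lemma traj_mem (hP0 : IsStochastic P0) (hP1 : IsStochastic P1) {x : Fin n → ℝ}
    {X U : ℕ → Fin n → ℝ} (hT : IsTraj α P0 P1 x X U) (hx : x ∈ stdSimplex ℝ (Fin n)) :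
    ∀ t, X t ∈ stdSimplex ℝ (Fin n) := by
  intro t
  induction t with
  | zero => rw [hT.1]; exact hx
  | succ t ih =>
      rw [(hT.2 t).2]
      exact phi_mem hP0 hP1 ih (hT.2 t).1

lemma WS_bdd (hP0 : IsStochastic P0) (hP1 : IsStochastic P1)
    {r0 r1 : Fin n → ℝ} (hr0 : ∀ i, r0 i ∈ Set.Icc (0 : ℝ) 1)
    (hr1 : ∀ i, r1 i ∈ Set.Icc (0 : ℝ) 1) (lam : Fin n → ℝ) (τ : ℕ)
    {x : Fin n → ℝ} (hx : x ∈ stdSimplex ℝ (Fin n)) :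
    ∀ v ∈ WS α P0 P1 r0 r1 lam τ x, v ≤ 2 * τ + ∑ i, |lam i| := by
  rintro v ⟨X, U, hT, rfl⟩
  have hX := traj_mem hP0 hP1 hT hx
  have hrew : ∀ t, rew r0 r1 (X t) (U t) ≤ 2 := by
    intro t
    obtain ⟨hXn, hXs⟩ := (mem_simplex_iff _).1 (hX t)
    obtain ⟨hUb, _⟩ := (hT.2 t).1
    have h1 : r0 ⬝ᵥ X t ≤ 1 := by
      calc r0 ⬝ᵥ X t = ∑ i, r0 i * X t i := rfl
        _ ≤ ∑ i, X t i := Finset.sum_le_sum fun i _ =>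
            mul_le_of_le_one_left (hXn i) (hr0 i).2
        _ = 1 := hXs
    have h2 : (r1 - r0) ⬝ᵥ U t ≤ 1 := by
      calc (r1 - r0) ⬝ᵥ U t = ∑ i, (r1 i - r0 i) * U t i := rfl
        _ ≤ ∑ i, U t i := Finset.sum_le_sum fun i _ =>
            mul_le_of_le_one_left (hUb i).1 (by linarith [(hr1 i).2, (hr0 i).1])
        _ ≤ ∑ i, X t i := Finset.sum_le_sum fun i _ => (hUb i).2
        _ = 1 := hXs
    calc rew r0 r1 (X t) (U t) = r0 ⬝ᵥ X t + (r1 - r0) ⬝ᵥ U t := rfl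
      _ ≤ 1 + 1 := add_le_add h1 h2
      _ = 2 := by norm_num
  have hter : lam ⬝ᵥ X τ ≤ ∑ i, |lam i| := by
    obtain ⟨hXn, hXs⟩ := (mem_simplex_iff _).1 (hX τ)
    calc lam ⬝ᵥ X τ = ∑ i, lam i * X τ i := rfl
      _ ≤ ∑ i, |lam i| := Finset.sum_le_sum fun i _ => by
          have hle1 : X τ i ≤ 1 := by
            rw [← hXs]
            exact Finset.single_le_sum (fun j _ => hXn j) (Finset.mem_univ i)
          calc lam i * X τ i ≤ |lam i| * X τ i :=
                mul_le_mul_of_nonneg_right (le_abs_self _) (hXn i)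
            _ ≤ |lam i| * 1 := mul_le_mul_of_nonneg_left hle1 (abs_nonneg _)
            _ = |lam i| := mul_one _
  have hsum : ∑ t ∈ Finset.range τ, rew r0 r1 (X t) (U t) ≤ 2 * τ := by
    calc ∑ t ∈ Finset.range τ, rew r0 r1 (X t) (U t)
        ≤ ∑ _t ∈ Finset.range τ, (2 : ℝ) := Finset.sum_le_sum fun t _ => hrew t
      _ = 2 * τ := by simp [mul_comm]
  linarith

lemma WS_bddAbove (hP0 : IsStochastic P0) (hP1 : IsStochastic P1)
    {r0 r1 : Fin n → ℝ} (hr0 : ∀ i, r0 i ∈ Set.Icc (0 : ℝ) 1)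
    (hr1 : ∀ i, r1 i ∈ Set.Icc (0 : ℝ) 1) (lam : Fin n → ℝ) (τ : ℕ)
    {x : Fin n → ℝ} (hx : x ∈ stdSimplex ℝ (Fin n)) :
    BddAbove (WS α P0 P1 r0 r1 lam τ x) :=
  ⟨2 * τ + ∑ i, |lam i|, fun v hv => WS_bdd hP0 hP1 hr0 hr1 lam τ hx v hv⟩

lemma WS_nonempty (hP0 : IsStochastic P0) (hP1 : IsStochastic P1) (hα : 0 ≤ α)
    (r0 r1 lam : Fin n → ℝ) (τ : ℕ)
    {x : Fin n → ℝ} (hx : x ∈ stdSimplex ℝ (Fin n)) :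
    (WS α P0 P1 r0 r1 lam τ x).Nonempty := by
  set X : ℕ → Fin n → ℝ := fun t => (fun z => phi P0 P1 z (0 : Fin n → ℝ))^[t] x with hXdef
  have hmem : ∀ t, X t ∈ stdSimplex ℝ (Fin n) := by
    intro t
    induction t with
    | zero => simpa [hXdef] using hx
    | succ t ih =>
        have h0 : (0 : Fin n → ℝ) ∈ feas α (X t) := by
          refine ⟨fun i => ⟨le_refl _, ((mem_simplex_iff _).1 ih).1 i⟩, by simpa⟩
        have : X (t + 1) = phi P0 P1 (X t) 0 := by
          simp [hXdef, Function.iterate_succ_apply']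
        rw [this]
        exact phi_mem hP0 hP1 ih h0
  refine ⟨_, X, fun _ => 0, ⟨by simp [hXdef], fun t => ⟨?_, ?_⟩⟩, rfl⟩
  · exact ⟨fun i => ⟨le_refl _, ((mem_simplex_iff _).1 (hmem t)).1 i⟩, by simpa⟩
  · simp [hXdef, Function.iterate_succ_apply']

lemma dot_comb (a b : ℝ) (r x y : Fin n → ℝ) :
    r ⬝ᵥ (a • x + b • y) = a * (r ⬝ᵥ x) + b * (r ⬝ᵥ y) := by
  simp only [dotProduct, Pi.add_apply, Pi.smul_apply, smul_eq_mul, Finset.mul_sum,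
    ← Finset.sum_add_distrib]
  exact Finset.sum_congr rfl fun i _ => by ring

lemma rew_comb (a b : ℝ) (r0 r1 x y u v : Fin n → ℝ) :
    rew r0 r1 (a • x + b • y) (a • u + b • v)
      = a * rew r0 r1 x u + b * rew r0 r1 y v := by
  simp only [rew, dot_comb]; ring

lemma phi_comb (a b : ℝ) (x y u v : Fin n → ℝ) :
    phi P0 P1 (a • x + b • y) (a • u + b • v)
      = a • phi P0 P1 x u + b • phi P0 P1 y v := by
  funext j
  simp only [Pi.add_apply, Pi.smul_apply, smul_eq_mul, phi_apply, Finset.mul_sum,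
    ← Finset.sum_add_distrib]
  exact Finset.sum_congr rfl fun i _ => by ring

end Aux
/-- for every `λ` and every `τ ≥ 1`, the finite-horizon value
`x ↦ W_τ(x)` is concave on the simplex `Δ`. -/
theorem stmt16 {n : ℕ} (hn : 1 ≤ n)
    (P0 P1 : Matrix (Fin n) (Fin n) ℝ) (hP0 : IsStochastic P0) (hP1 : IsStochastic P1)
    (r0 r1 : Fin n → ℝ) (hr0 : ∀ i, r0 i ∈ Set.Icc (0 : ℝ) 1)
    (hr1 : ∀ i, r1 i ∈ Set.Icc (0 : ℝ) 1)
    (α : ℝ) (hα : α ∈ Set.Ioc (0 : ℝ) 1) :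
    ∀ lam : Fin n → ℝ, ∀ τ : ℕ, 1 ≤ τ →
      ConcaveOn ℝ (stdSimplex ℝ (Fin n)) (Wval α P0 P1 r0 r1 lam τ) := by
  intro lam τ hτ
  refine ⟨convex_stdSimplex ℝ _, ?_⟩
  intro x hx y hy a b ha hb hab
  have hz : a • x + b • y ∈ stdSimplex ℝ (Fin n) :=
    (convex_stdSimplex ℝ (Fin n)) hx hy ha hb hab
  -- key superadditivity step
  have key : ∀ v1 ∈ WS α P0 P1 r0 r1 lam τ x, ∀ v2 ∈ WS α P0 P1 r0 r1 lam τ y,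
      a * v1 + b * v2 ≤ Wval α P0 P1 r0 r1 lam τ (a • x + b • y) := by
    rintro v1 ⟨X, U, hXU, rfl⟩ v2 ⟨Y, V, hYV, rfl⟩
    rw [Wval_eq]
    refine le_csSup (WS_bddAbove hP0 hP1 hr0 hr1 lam τ hz) ?_
    refine ⟨fun t => a • X t + b • Y t, fun t => a • U t + b • V t, ⟨?_, ?_⟩, ?_⟩
    · show a • X 0 + b • Y 0 = a • x + b • y
      rw [hXU.1, hYV.1]
    · intro t
      obtain ⟨⟨hU1, hU2⟩, hXd⟩ := hXU.2 t
      obtain ⟨⟨hV1, hV2⟩, hYd⟩ := hYV.2 t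
      refine ⟨⟨fun i => ⟨?_, ?_⟩, ?_⟩, ?_⟩
      · exact add_nonneg (mul_nonneg ha (hU1 i).1) (mul_nonneg hb (hV1 i).1)
      · exact add_le_add (mul_le_mul_of_nonneg_left (hU1 i).2 ha)
          (mul_le_mul_of_nonneg_left (hV1 i).2 hb)
      · calc ∑ i, (a • U t + b • V t) i
            = a * ∑ i, U t i + b * ∑ i, V t i := by
              simp [Finset.mul_sum, ← Finset.sum_add_distrib]
          _ ≤ a * α + b * α := add_le_add (mul_le_mul_of_nonneg_left hU2 ha)
              (mul_le_mul_of_nonneg_left hV2 hb)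
          _ = α := by rw [← add_mul, hab, one_mul]
      · show a • X (t + 1) + b • Y (t + 1)
            = phi P0 P1 (a • X t + b • Y t) (a • U t + b • V t)
        rw [hXd, hYd]; exact (phi_comb a b (X t) (Y t) (U t) (V t)).symm
    · simp only [rew_comb, dot_comb, Finset.sum_add_distrib, ← Finset.mul_sum]
      ring
  have hne_x := WS_nonempty hP0 hP1 (le_of_lt hα.1) r0 r1 lam τ hx
  have hne_y := WS_nonempty hP0 hP1 (le_of_lt hα.1) r0 r1 lam τ hy
  simp only [smul_eq_mul]
  rcases eq_or_lt_of_le ha with ha0 | ha'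
  · have hb1 : b = 1 := by linarith
    have : a • x + b • y = y := by rw [← ha0, hb1]; simp
    rw [this] at *
    rw [← ha0, hb1]; simp
  rcases eq_or_lt_of_le hb with hb0 | hb'
  · have ha1 : a = 1 := by linarith
    have : a • x + b • y = x := by rw [← hb0, ha1]; simp
    rw [this] at *
    rw [← hb0, ha1]; simp
  set fz := Wval α P0 P1 r0 r1 lam τ (a • x + b • y) with hfz
  have h1 : sSup (WS α P0 P1 r0 r1 lam τ x) ≤ (fz - b * sSup (WS α P0 P1 r0 r1 lam τ y)) / a := by
    refine csSup_le hne_x fun v1 hv1 => ?_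
    rw [le_div_iff₀ ha']
    have h2 : sSup (WS α P0 P1 r0 r1 lam τ y) ≤ (fz - a * v1) / b := by
      refine csSup_le hne_y fun v2 hv2 => ?_
      rw [le_div_iff₀ hb']
      have := key v1 hv1 v2 hv2
      linarith
    have h3 : b * sSup (WS α P0 P1 r0 r1 lam τ y) ≤ fz - a * v1 := by
      have := mul_le_mul_of_nonneg_left h2 (le_of_lt hb')
      rwa [mul_div_cancel₀ _ (ne_of_gt hb')] at this
    linarith
  have h4 : a * sSup (WS α P0 P1 r0 r1 lam τ x) ≤ fz - b * sSup (WS α P0 P1 r0 r1 lam τ y) := by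
    have := mul_le_mul_of_nonneg_left h1 (le_of_lt ha')
    rwa [mul_div_cancel₀ _ (ne_of_gt ha')] at this
  rw [Wval_eq, Wval_eq]
  linarith
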